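/- Let s be a list of natural numbers of length n ≥ 1 with C(s) = 1. Then there exists exactly one k with 0 ≤ k < n such that the k-rotation of s is a well-formed expression. -/

import Mathlib

/-- `C v` is the length of `v` minus the sum of its entries. -/
def C (v : List ℕ) : ℤ := (v.length : ℤ) - (v.sum : ℤ)

/-- A list of natural numbers is a well-formed expression (Polish notation
encoding of an ordered rooted tree by outdegrees) if it is of the form
`d :: (w₁ ++ ⋯ ++ w_d)` where each `wᵢ` is a well-formed expression. -/
inductive IsWF : List ℕ → Prop
  | node (d : ℕ) (ws : List (List ℕ)) (hlen : ws.length = d)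
      (h : ∀ w ∈ ws, IsWF w) : IsWF (d :: ws.flatten)

/-- The `k`-rotation of `s = u ++ v` with `v` of length `k` is `v ++ u`. -/
def krot (k : ℕ) (s : List ℕ) : List ℕ :=
  s.drop (s.length - k) ++ s.take (s.length - k)

/-! Reading a list from left to right, the prefix charge `C (r.take k)` starts at `0` and rises by
at most one per entry. A list is a concatenation of `d` well-formed expressions exactly when this
charge reaches `d` for the first time at the end of the list: split off the shortest prefix of
charge `1`, which is an expression of the form `a :: (forest of a expressions)`, and recurse.

For `C s = 1` and `0 < t ≤ s.length`, the prefix charges of the rotation `s.drop t ++ s.take t` are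
`P (t + j) - P t` and then `1 - P t + P i`, where `P u = C (s.take u)`. So the rotation is
well formed exactly when `t` is the first position at which `P` attains its maximum on
`[0, s.length]`; such a `t` exists, is unique, and is positive because `P 0 = 0 < 1 = P s.length`. -/

lemma C_nil : C [] = 0 := rfl

lemma C_append (a b : List ℕ) : C (a ++ b) = C a + C b := by
  simp only [C, List.length_append, List.sum_append]; push_cast; ring

lemma C_cons (d : ℕ) (r : List ℕ) : C (d :: r) = 1 - d + C r := by
  simp only [C, List.length_cons, List.sum_cons]; push_cast; ring

lemma C_drop (s : List ℕ) (t : ℕ) : C (s.drop t) = C s - C (s.take t) := by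
  have := C_append (s.take t) (s.drop t)
  rw [List.take_append_drop] at this
  linarith

lemma C_take_succ_le (r : List ℕ) (i : ℕ) : C (r.take (i + 1)) ≤ C (r.take i) + 1 := by
  rw [List.take_add_one]
  cases r[i]? with
  | none => simp
  | some a => simp only [Option.toList_some, C_append, C_cons, C_nil]; omega

def ReachesFirstAtEnd (d : ℕ) (r : List ℕ) : Prop :=
  C r = d ∧ ∀ k < r.length, C (r.take k) < d

lemma reachesFirstAtEnd_zero_iff {r : List ℕ} : ReachesFirstAtEnd 0 r ↔ r = [] := by
  constructor
  · rintro ⟨-, h⟩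
    by_contra hr
    simpa [C_nil] using h 0 (List.length_pos_iff.mpr hr)
  · rintro rfl
    exact ⟨rfl, by simp⟩

lemma reachesFirstAtEnd_one_cons_iff {a : ℕ} {r : List ℕ} :
    ReachesFirstAtEnd 1 (a :: r) ↔ ReachesFirstAtEnd a r := by
  simp only [ReachesFirstAtEnd, C_cons, List.length_cons, Nat.cast_one]
  constructor
  · rintro ⟨hC, hpre⟩
    refine ⟨by linarith, fun k hk => ?_⟩
    have := hpre (k + 1) (by omega)
    rw [List.take_succ_cons, C_cons] at this
    linarith
  · rintro ⟨hC, hpre⟩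
    refine ⟨by linarith, fun k hk => ?_⟩
    cases k with
    | zero => simp [C_nil]
    | succ k =>
      rw [List.take_succ_cons, C_cons]
      linarith [hpre k (by omega)]

lemma ReachesFirstAtEnd.exists_cons {w : List ℕ} (h : ReachesFirstAtEnd 1 w) :
    ∃ a r, w = a :: r ∧ ReachesFirstAtEnd a r := by
  cases w with
  | nil => simp [ReachesFirstAtEnd, C_nil] at h
  | cons a r => exact ⟨a, r, rfl, reachesFirstAtEnd_one_cons_iff.mp h⟩

lemma ReachesFirstAtEnd.append {w r : List ℕ} {d : ℕ} (hw : ReachesFirstAtEnd 1 w)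
    (hr : ReachesFirstAtEnd d r) : ReachesFirstAtEnd (d + 1) (w ++ r) := by
  refine ⟨by rw [C_append, hw.1, hr.1]; push_cast; ring, fun k hk => ?_⟩
  rcases lt_or_ge k w.length with hkw | hkw
  · rw [List.take_append_of_le_length hkw.le]
    have := hw.2 k hkw
    push_cast; omega
  · obtain ⟨i, rfl⟩ := Nat.exists_eq_add_of_le hkw
    rw [List.take_length_add_append, C_append, hw.1]
    have := hr.2 i (by simp only [List.length_append] at hk; omega)
    push_cast; linarith

lemma reachesFirstAtEnd_flatten {ws : List (List ℕ)} (h : ∀ w ∈ ws, ReachesFirstAtEnd 1 w) :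
    ReachesFirstAtEnd ws.length ws.flatten := by
  induction ws with
  | nil => exact reachesFirstAtEnd_zero_iff.mpr rfl
  | cons w ws ih =>
    rw [List.forall_mem_cons] at h
    exact h.1.append (ih h.2)

lemma ReachesFirstAtEnd.exists_append_eq {d : ℕ} {r : List ℕ} (h : ReachesFirstAtEnd (d + 1) r) :
    ∃ w r', r = w ++ r' ∧ ReachesFirstAtEnd 1 w ∧ ReachesFirstAtEnd d r' := by
  classical
  have hex : ∃ j, 1 ≤ C (r.take j) := ⟨r.length, by rw [List.take_length, h.1]; push_cast; omega⟩
  obtain ⟨j, hj, hmin⟩ : ∃ j, 1 ≤ C (r.take j) ∧ ∀ i < j, C (r.take i) < 1 :=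
    ⟨Nat.find hex, Nat.find_spec hex, fun i hi => not_le.mp (Nat.find_min hex hi)⟩
  have hCj : C (r.take j) = 1 := by
    cases j with
    | zero => simp [C_nil] at hj
    | succ i => linarith [C_take_succ_le r i, hmin i i.lt_succ_self]
  refine ⟨r.take j, r.drop j, (List.take_append_drop j r).symm, ⟨hCj, fun k hk => ?_⟩,
    ⟨?_, fun k hk => ?_⟩⟩
  · rw [List.take_take, min_eq_left (by simp at hk; omega)]
    exact hmin k (by simp at hk; omega)
  · rw [C_drop, h.1, hCj]; push_cast; ring
  · have := h.2 (j + k) (by simp at hk; omega)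
    rw [List.take_add, C_append, hCj] at this
    push_cast at this; linarith

lemma IsWF.reachesFirstAtEnd {w : List ℕ} (hw : IsWF w) : ReachesFirstAtEnd 1 w := by
  induction hw with
  | node d ws hlen _ ih =>
    rw [reachesFirstAtEnd_one_cons_iff, ← hlen]
    exact reachesFirstAtEnd_flatten ih

lemma exists_isWF_flatten_of_reachesFirstAtEnd {d : ℕ} {r : List ℕ}
    (h : ReachesFirstAtEnd d r) :
    ∃ ws : List (List ℕ), ws.length = d ∧ ws.flatten = r ∧ ∀ w ∈ ws, IsWF w := by
  induction hn : r.length using Nat.strong_induction_on generalizing d r with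
  | _ n ih =>
  subst hn
  cases d with
  | zero => exact ⟨[], rfl, (reachesFirstAtEnd_zero_iff.mp h).symm, by simp⟩
  | succ d =>
    obtain ⟨w, r', rfl, hw, hr'⟩ := h.exists_append_eq
    obtain ⟨a, t, rfl, ht⟩ := hw.exists_cons
    obtain ⟨vs, hvs, rfl, hvsWF⟩ := ih _ (by simp) ht rfl
    obtain ⟨ws, rfl, rfl, hwsWF⟩ := ih _ (by simp) hr' rfl
    exact ⟨(a :: vs.flatten) :: ws, rfl, rfl,
      List.forall_mem_cons.mpr ⟨IsWF.node a vs hvs hvsWF, hwsWF⟩⟩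

theorem isWF_iff_reachesFirstAtEnd {w : List ℕ} : IsWF w ↔ ReachesFirstAtEnd 1 w := by
  refine ⟨IsWF.reachesFirstAtEnd, fun h => ?_⟩
  obtain ⟨a, r, rfl, hr⟩ := h.exists_cons
  obtain ⟨ws, hlen, rfl, hws⟩ := exists_isWF_flatten_of_reachesFirstAtEnd hr
  exact IsWF.node a ws hlen hws

def IsFirstMaxOn {α : Type*} [LinearOrder α] (f : ℕ → α) (n t : ℕ) : Prop :=
  t ≤ n ∧ (∀ u ≤ n, f u ≤ f t) ∧ ∀ i < t, f i < f t

lemma IsFirstMaxOn.eq {α : Type*} [LinearOrder α] {f : ℕ → α} {n t t' : ℕ}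
    (h : IsFirstMaxOn f n t) (h' : IsFirstMaxOn f n t') : t = t' := by
  rcases lt_trichotomy t t' with hlt | heq | hgt
  · exact absurd (h.2.1 t' h'.1) (not_le.mpr (h'.2.2 t hlt))
  · exact heq
  · exact absurd (h'.2.1 t h.1) (not_le.mpr (h.2.2 t' hgt))

lemma existsUnique_isFirstMaxOn {α : Type*} [LinearOrder α] (f : ℕ → α) (n : ℕ) :
    ∃! t, IsFirstMaxOn f n t := by
  classical
  have hex : ∃ t, t ≤ n ∧ ∀ u ≤ n, f u ≤ f t := by
    obtain ⟨t, ht, hmax⟩ := (Finset.Iic n).exists_max_image f ⟨0, by simp⟩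
    exact ⟨t, by simpa using ht, fun u hu => hmax u (by simpa using hu)⟩
  obtain ⟨htn, hmax⟩ := Nat.find_spec hex
  have hfirst : IsFirstMaxOn f n (Nat.find hex) := by
    refine ⟨htn, hmax, fun i hi => ?_⟩
    have := Nat.find_min hex hi
    push Not at this
    obtain ⟨u, hu, hlt⟩ := this (by omega)
    exact hlt.trans_le (hmax u hu)
  exact ⟨Nat.find hex, hfirst, fun t' ht' => ht'.eq hfirst⟩

lemma reachesFirstAtEnd_drop_append_take_iff {s : List ℕ} (hC : C s = 1) {t : ℕ} (ht : 0 < t)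
    (htn : t ≤ s.length) :
    ReachesFirstAtEnd 1 (s.drop t ++ s.take t) ↔
      IsFirstMaxOn (fun u => C (s.take u)) s.length t := by
  set n := s.length
  have hlen : (s.drop t ++ s.take t).length = n := by simp; omega
  have hCrot : C (s.drop t ++ s.take t) = 1 := by rw [C_append, C_drop, hC]; ring
  have hhead : ∀ j ≤ n - t,
      C ((s.drop t ++ s.take t).take j) = C (s.take (t + j)) - C (s.take t) := by
    intro j hj
    rw [List.take_append_of_le_length (by simpa using hj), List.take_add, C_append]
    ring
  have htail : ∀ i ≤ t,
      C ((s.drop t ++ s.take t).take (n - t + i)) = 1 - C (s.take t) + C (s.take i) := by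
    intro i hi
    rw [← List.length_drop, List.take_length_add_append, C_append, C_drop, hC, List.take_take,
      min_eq_left hi]
  simp only [ReachesFirstAtEnd, IsFirstMaxOn, hlen, hCrot, Nat.cast_one, true_and]
  constructor
  · intro h
    have hfirst : ∀ i < t, C (s.take i) < C (s.take t) := fun i hi => by
      have := h (n - t + i) (by omega)
      rw [htail i hi.le] at this
      linarith
    refine ⟨htn, fun u hu => ?_, hfirst⟩
    rcases lt_or_ge u t with hut | hut
    · exact (hfirst u hut).le
    · have := h (u - t) (by omega)
      rw [hhead _ (by omega), Nat.add_sub_cancel' hut] at this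
      linarith
  · rintro ⟨-, hmax, hfirst⟩ k hk
    rcases le_or_gt k (n - t) with hkt | hkt
    · rw [hhead k hkt]
      linarith [hmax (t + k) (by omega)]
    · obtain ⟨i, rfl⟩ : ∃ i, k = n - t + i := ⟨k - (n - t), by omega⟩
      rw [htail i (by omega)]
      linarith [hfirst i (by omega)]

lemma isWF_krot_iff {s : List ℕ} (hC : C s = 1) {k : ℕ} (hk : k < s.length) :
    IsWF (krot k s) ↔ IsFirstMaxOn (fun u => C (s.take u)) s.length (s.length - k) := by
  rw [krot, isWF_iff_reachesFirstAtEnd,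
    reachesFirstAtEnd_drop_append_take_iff hC (by omega) (by omega)]

theorem stmt_8_general (s : List ℕ) (hC : C s = 1) :
    ∃! k : ℕ, k < s.length ∧ IsWF (krot k s) := by
  obtain ⟨t, ht, huniq⟩ := existsUnique_isFirstMaxOn (fun u => C (s.take u)) s.length
  have htn := ht.1
  have ht0 : 0 < t := by
    refine Nat.pos_of_ne_zero fun h0 => ?_
    have := ht.2.1 s.length le_rfl
    simp [h0, hC, C_nil] at this
  refine ⟨s.length - t, ⟨by omega, (isWF_krot_iff hC (by omega)).mpr ?_⟩, ?_⟩
  · rwa [Nat.sub_sub_self htn]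
  · rintro k ⟨hk, hwf⟩
    have := huniq _ ((isWF_krot_iff hC hk).mp hwf)
    omega

theorem stmt_8 (s : List ℕ) (hn : 1 ≤ s.length) (hC : C s = 1) :
    ∃! k : ℕ, k < s.length ∧ IsWF (krot k s) :=
  stmt_8_general s hC
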